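/- arXiv:math/0506045 — 2 statements merged into one kernel-verified Lean document; each statement's English description precedes it below -/
import Mathlib

section
/- Let C be a binary code, G its reduced basis w.r.t. <_e with the variables ordered x_1 ≺ … ≺ x_n, and σ ∈ S_n. Then σ(G) is a reduced basis for the code σ(C) with respect to the error-vector ordering built from the admissible ordering in which x_{σ(1)} ≺ … ≺ x_{σ(n)}; in particular the set of canonical forms for σ(C) under this ordering is σ(N). -/
/-- `[X]` is the free commutative monoid on `x_1, …, x_n`. -/
abbrev BWord (n : ℕ) := Multiset (Fin n)

/-- The set of indices of variables dividing `w`. -/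
def Ind {n : ℕ} (w : BWord n) : Finset (Fin n) := w.toFinset

/-- The error-vector ordering `<_e` built from an admissible ordering `prec`. -/
def ltE {n : ℕ} (prec : BWord n → BWord n → Prop) (u w : BWord n) : Prop :=
  (Ind u).card < (Ind w).card ∨ ((Ind u).card = (Ind w).card ∧ prec u w)

/-- `ψ : [X] → F_2^n`. -/
def psi {n : ℕ} (w : BWord n) : Fin n → ZMod 2 := fun i => (w.count i : ZMod 2)

/-- Action of `S_n` on binary words (permuting variable indices). -/
def permBW {n : ℕ} (σ : Equiv.Perm (Fin n)) (w : BWord n) : BWord n := w.map σ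

/-- Action of `S_n` on `F_2^n` as a linear map: `(σ·y)_i = y_{σ⁻¹ i}`. -/
def permLin {n : ℕ} (σ : Equiv.Perm (Fin n)) :
    (Fin n → ZMod 2) →ₗ[ZMod 2] (Fin n → ZMod 2) :=
  LinearMap.funLeft (ZMod 2) (ZMod 2) fun i => σ⁻¹ i

/-- The set `B(C)` of binomials, as pairs (leading term, lower term). -/
def BC {n : ℕ} (lt : BWord n → BWord n → Prop)
    (C : Submodule (ZMod 2) (Fin n → ZMod 2)) (N : Set (BWord n)) :
    Set (BWord n × BWord n) :=
  {g | ∃ w ∈ N, ∃ w' ∈ N, ∃ x : Fin n,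
    g = (w + {x}, w') ∧ w + {x} ≠ w' ∧ psi (w + {x}) - psi w' ∈ C ∧ lt w' (w + {x})}

/-- `G` is the reduced basis for `C`, canonical forms `N`, ordering `lt`. -/
def IsRedBasis {n : ℕ} (lt : BWord n → BWord n → Prop)
    (C : Submodule (ZMod 2) (Fin n → ZMod 2)) (N : Set (BWord n))
    (G : Set (BWord n × BWord n)) : Prop :=
  G ⊆ BC lt C N ∧
  (∀ g ∈ BC lt C N, ∃ g' ∈ G, g'.1 ≤ g.1) ∧
  (∀ g ∈ G, ∀ g' ∈ G, g ≠ g' → ¬ g.1 ≤ g'.1)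

/-!
Relabelling the variables by `σ` commutes with everything in sight: `ψ ∘ σ = σ ∘ ψ`, the support
size `|Ind w|` is invariant, divisibility of words is preserved and reflected, and the transported
ordering compares `u, w` exactly as `prec` compares `σ⁻¹ u, σ⁻¹ w`. Hence `σ` maps `B(C)` onto
`B(σ C)`, and the three defining properties of a reduced basis, as well as unique representation
by canonical forms, are carried over verbatim.
-/

section Permutation

variable {n : ℕ}

@[simp]
lemma permBW_inv_permBW (σ : Equiv.Perm (Fin n)) (w : BWord n) :
    permBW σ⁻¹ (permBW σ w) = w := by
  simp [permBW]

lemma permBW_add_singleton (σ : Equiv.Perm (Fin n)) (w : BWord n) (x : Fin n) :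
    permBW σ (w + {x}) = permBW σ w + {σ x} :=
  Multiset.map_add _ _ _

lemma permBW_injective (σ : Equiv.Perm (Fin n)) : Function.Injective (permBW σ) :=
  Multiset.map_injective σ.injective

lemma permBW_le_permBW_iff (σ : Equiv.Perm (Fin n)) {u v : BWord n} :
    permBW σ u ≤ permBW σ v ↔ u ≤ v := by
  refine ⟨fun h => ?_, Multiset.map_le_map⟩
  simpa [permBW, Multiset.map_map] using Multiset.map_le_map (f := ⇑σ⁻¹) h

lemma card_Ind_permBW (σ : Equiv.Perm (Fin n)) (w : BWord n) :
    (Ind (permBW σ w)).card = (Ind w).card := by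
  simp only [Ind, permBW, Multiset.toFinset_map]
  exact Finset.card_image_of_injective _ σ.injective

@[simp]
lemma permLin_inv_permLin (σ : Equiv.Perm (Fin n)) (y : Fin n → ZMod 2) :
    permLin σ⁻¹ (permLin σ y) = y := by
  funext i
  simp [permLin]

lemma mem_map_permLin_iff (σ : Equiv.Perm (Fin n))
    (C : Submodule (ZMod 2) (Fin n → ZMod 2)) (y : Fin n → ZMod 2) :
    y ∈ C.map (permLin σ) ↔ permLin σ⁻¹ y ∈ C := by
  refine ⟨fun ⟨z, hz, hzy⟩ => by rwa [← hzy, permLin_inv_permLin], fun h => ⟨_, h, ?_⟩⟩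
  simpa using permLin_inv_permLin σ⁻¹ y

lemma psi_permBW (σ : Equiv.Perm (Fin n)) (w : BWord n) :
    psi (permBW σ w) = permLin σ (psi w) := by
  funext i
  simp only [psi, permBW, permLin, LinearMap.funLeft_apply]
  congr 1
  simpa using Multiset.count_map_eq_count' σ w σ.injective (σ⁻¹ i)

lemma psi_sub_psi_permBW_mem_map_iff (σ : Equiv.Perm (Fin n))
    (C : Submodule (ZMod 2) (Fin n → ZMod 2)) (u w : BWord n) :
    psi (permBW σ u) - psi (permBW σ w) ∈ C.map (permLin σ) ↔ psi u - psi w ∈ C := by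
  rw [psi_permBW, psi_permBW, ← map_sub, mem_map_permLin_iff, permLin_inv_permLin]

lemma ltE_transport_iff (prec : BWord n → BWord n → Prop) (σ : Equiv.Perm (Fin n))
    (u w : BWord n) :
    ltE (fun a b => prec (permBW σ⁻¹ a) (permBW σ⁻¹ b)) (permBW σ u) (permBW σ w) ↔
      ltE prec u w := by
  simp only [ltE, card_Ind_permBW, permBW_inv_permBW]

end Permutation

section ReducedBasis

variable {n : ℕ} (prec : BWord n → BWord n → Prop) (σ : Equiv.Perm (Fin n))
  (C : Submodule (ZMod 2) (Fin n → ZMod 2)) (N : Set (BWord n))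

lemma BC_transport :
    BC (ltE fun u w => prec (permBW σ⁻¹ u) (permBW σ⁻¹ w)) (C.map (permLin σ))
        (permBW σ '' N) =
      Prod.map (permBW σ) (permBW σ) '' BC (ltE prec) C N := by
  ext g
  constructor
  · rintro ⟨_, ⟨w, hw, rfl⟩, _, ⟨w', hw', rfl⟩, x, rfl, hne, hmem, hlt⟩
    have hx : permBW σ w + {x} = permBW σ (w + {σ⁻¹ x}) := by
      simp [permBW_add_singleton]
    rw [hx] at hne hmem hlt ⊢
    rw [psi_sub_psi_permBW_mem_map_iff] at hmem
    rw [ltE_transport_iff] at hlt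
    exact ⟨_, ⟨w, hw, w', hw', σ⁻¹ x, rfl, fun h => hne (by rw [h]), hmem, hlt⟩, rfl⟩
  · rintro ⟨_, ⟨w, hw, w', hw', x, rfl, hne, hmem, hlt⟩, rfl⟩
    refine ⟨permBW σ w, ⟨w, hw, rfl⟩, _, ⟨w', hw', rfl⟩, σ x,
      by simp [permBW_add_singleton], ?_, ?_, ?_⟩ <;> rw [← permBW_add_singleton]
    · exact (permBW_injective σ).ne hne
    · rwa [psi_sub_psi_permBW_mem_map_iff]
    · rwa [ltE_transport_iff]

lemma IsRedBasis.transport {G : Set (BWord n × BWord n)} (hG : IsRedBasis (ltE prec) C N G) :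
    IsRedBasis (ltE fun u w => prec (permBW σ⁻¹ u) (permBW σ⁻¹ w)) (C.map (permLin σ))
      (permBW σ '' N) (Prod.map (permBW σ) (permBW σ) '' G) := by
  obtain ⟨hsub, hcover, hantichain⟩ := hG
  rw [IsRedBasis, BC_transport]
  refine ⟨Set.image_mono hsub, ?_, ?_⟩
  · rintro _ ⟨g, hg, rfl⟩
    obtain ⟨g', hg', hle⟩ := hcover g hg
    exact ⟨_, Set.mem_image_of_mem _ hg', (permBW_le_permBW_iff σ).2 hle⟩
  · rintro _ ⟨g, hg, rfl⟩ _ ⟨g', hg', rfl⟩ hne hle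
    exact hantichain g hg g' hg' (fun h => hne (by rw [h])) ((permBW_le_permBW_iff σ).1 hle)

lemma existsUnique_canonical_transport
    (hN : ∀ u : BWord n, ∃! w : BWord n, w ∈ N ∧ psi u - psi w ∈ C) (u : BWord n) :
    ∃! w : BWord n, w ∈ permBW σ '' N ∧ psi u - psi w ∈ C.map (permLin σ) := by
  obtain ⟨w, ⟨hwN, hwC⟩, huniq⟩ := hN (permBW σ⁻¹ u)
  have hu : u = permBW σ (permBW σ⁻¹ u) := by simpa using (permBW_inv_permBW σ⁻¹ u).symm
  refine ⟨permBW σ w, ⟨⟨w, hwN, rfl⟩, ?_⟩, ?_⟩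
  · rwa [hu, psi_sub_psi_permBW_mem_map_iff]
  · rintro _ ⟨⟨v, hvN, rfl⟩, hv⟩
    rw [hu, psi_sub_psi_permBW_mem_map_iff] at hv
    rw [huniq v ⟨hvN, hv⟩]

end ReducedBasis

theorem stmt14_general {n : ℕ} (prec : BWord n → BWord n → Prop)
    (C : Submodule (ZMod 2) (Fin n → ZMod 2)) (N : Set (BWord n))
    (G : Set (BWord n × BWord n)) (σ : Equiv.Perm (Fin n))
    (hNrep : ∀ u : BWord n, ∃! w : BWord n, w ∈ N ∧ psi u - psi w ∈ C)
    (hG : IsRedBasis (ltE prec) C N G) :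
    IsRedBasis (ltE fun u w => prec (permBW σ⁻¹ u) (permBW σ⁻¹ w))
        (C.map (permLin σ)) (permBW σ '' N)
        ((fun g : BWord n × BWord n => (permBW σ g.1, permBW σ g.2)) '' G) ∧
    (∀ u : BWord n, ∃! w : BWord n,
      w ∈ permBW σ '' N ∧ psi u - psi w ∈ C.map (permLin σ)) :=
  ⟨hG.transport prec σ C N, existsUnique_canonical_transport σ C N hNrep⟩

/-- If `G` is a reduced basis for the binary code `C` w.r.t.
`<_e` built from the admissible ordering `prec` (variables ordered
`x_1 ≺ … ≺ x_n`), and `σ ∈ S_n`, then `σ(G)` is a reduced basis for `σ(C)`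
w.r.t. the error-vector ordering built from the transported admissible
ordering (in which `x_{σ(1)} ≺ … ≺ x_{σ(n)}`); in particular the set of
canonical forms for `σ(C)` under this ordering is `σ(N)`. -/
theorem stmt14 {n : ℕ} (prec : BWord n → BWord n → Prop)
    (htot : IsStrictTotalOrder (BWord n) prec)
    (hmul : ∀ u v w : BWord n, prec u v → prec (u + w) (v + w))
    (hone : ∀ u : BWord n, u ≠ 0 → prec 0 u)
    (C : Submodule (ZMod 2) (Fin n → ZMod 2)) (N : Set (BWord n))
    (G : Set (BWord n × BWord n)) (σ : Equiv.Perm (Fin n))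
    (hNrep : ∀ u : BWord n, ∃! w : BWord n, w ∈ N ∧ psi u - psi w ∈ C)
    (hG : IsRedBasis (ltE prec) C N G) :
    IsRedBasis (ltE fun u w => prec (permBW σ⁻¹ u) (permBW σ⁻¹ w))
        (C.map (permLin σ)) (permBW σ '' N)
        ((fun g : BWord n × BWord n => (permBW σ g.1, permBW σ g.2)) '' G) ∧
    (∀ u : BWord n, ∃! w : BWord n,
      w ∈ permBW σ '' N ∧ psi u - psi w ∈ C.map (permLin σ)) :=
  stmt14_general prec C N G σ hNrep hG
end

section
/- (Decoding theorem) Let C be a binary code with error-correcting capability t and reduced basis G w.r.t. <_e. For any word w ∈ [X]: if weight(ψ(Can(w,G))) ≤ t then ψ(Can(w,G)) is the unique error vector of ψ(w), i.e., ψ(w) − ψ(Can(w,G)) ∈ C and weight(ψ(Can(w,G))) ≤ t; and if weight(ψ(Can(w,G))) > t then ψ(w) is at distance > t from every codeword. -/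
/-- A standard word: a squarefree monomial. -/
def Std {n : ℕ} (w : BWord n) : Prop := ∀ i : Fin n, w.count i ≤ 1

/-- The standard form of a word (exponents reduced mod 2 via `x_i² → 1`). -/
def stdW {n : ℕ} (w : BWord n) : BWord n :=
  (w.toFinset.filter fun i => w.count i % 2 = 1).val

/-- One-step reduction modulo the basis `G`. -/
def Red {n : ℕ} (G : Set (BWord n × BWord n)) (w w₁ : BWord n) : Prop :=
  (¬ Std w ∧ w₁ = stdW w) ∨
  (Std w ∧ ∃ g ∈ G, g.1 ≤ w ∧ w₁ = w - g.1 + g.2)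

/-!
Both reduction steps change `ψ` by an element of `C` (`x_i² → 1` not at all, a binomial of `G`
by a codeword), so `ψ (Can w)` lies in the coset `ψ w + C`. Two vectors of weight `≤ t` in one
coset differ by a codeword of weight `≤ 2t < d`, hence coincide. Conversely, a codeword within
`t` of `ψ w` translates to one within `t` of `ψ (Can w)`, and then the defining property of the
canonical forms forces `weight (ψ (Can w)) ≤ t`.
-/

section Hamming

variable {ι : Type*} [Fintype ι] {β : ι → Type*} [∀ i, AddCommGroup (β i)]
  [∀ i, DecidableEq (β i)]

theorem hammingNorm_sub_le (x y : ∀ i, β i) :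
    hammingNorm (x - y) ≤ hammingNorm x + hammingNorm y := by
  calc hammingNorm (x - y) = hammingDist y x := by
        rw [hammingDist_eq_hammingNorm, neg_add_eq_sub]
    _ ≤ hammingDist y 0 + hammingDist 0 x := hammingDist_triangle _ _ _
    _ = hammingNorm x + hammingNorm y := by
        rw [hammingDist_zero_right, hammingDist_zero_left, add_comm]

theorem hammingDist_sub_right (x y z : ∀ i, β i) :
    hammingDist (x - z) (y - z) = hammingDist x y := by
  rw [hammingDist_eq_hammingNorm, hammingDist_eq_hammingNorm]
  congr 1
  abel

theorem eq_of_sub_mem_of_hammingNorm_le (C : AddSubgroup (∀ i, β i))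
    {d t : ℕ} (hC : ∀ c ∈ C, c ≠ 0 → d ≤ hammingNorm c) (htd : 2 * t < d)
    {e₁ e₂ : ∀ i, β i} (he₁ : hammingNorm e₁ ≤ t) (he₂ : hammingNorm e₂ ≤ t)
    (hmem : e₁ - e₂ ∈ C) : e₁ = e₂ := by
  by_contra hne
  have hd := hC _ hmem (sub_ne_zero.2 hne)
  have := hammingNorm_sub_le e₁ e₂
  omega

end Hamming

variable {n : ℕ}

theorem psi_stdW (w : BWord n) : psi (stdW w) = psi w := by
  funext i
  simp only [psi, stdW, Multiset.count_eq_of_nodup (Finset.nodup _), Finset.mem_val,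
    Finset.mem_filter, Multiset.mem_toFinset]
  rw [← ZMod.natCast_mod (w.count i)]
  by_cases hi : i ∈ w
  · rcases Nat.mod_two_eq_zero_or_one (w.count i) with h | h <;> simp [hi, h]
  · simp [hi]

theorem psi_sub_add {w a : BWord n} (b : BWord n) (h : a ≤ w) :
    psi (w - a + b) = psi w - psi a + psi b := by
  funext i
  simp only [psi, Pi.add_apply, Pi.sub_apply, Multiset.count_add, Multiset.count_sub]
  rw [Nat.cast_add, Nat.cast_sub (Multiset.le_iff_count.mp h i)]

section Coset

variable {C : Submodule (ZMod 2) (Fin n → ZMod 2)} {G : Set (BWord n × BWord n)}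

theorem psi_sub_mem_of_red (hG : ∀ g ∈ G, psi g.1 - psi g.2 ∈ C) {w w₁ : BWord n}
    (h : Red G w w₁) : psi w - psi w₁ ∈ C := by
  rcases h with ⟨_, rfl⟩ | ⟨_, g, hg, hle, rfl⟩
  · simp [psi_stdW]
  · rw [psi_sub_add _ hle, show psi w - (psi w - psi g.1 + psi g.2) = psi g.1 - psi g.2 by abel]
    exact hG g hg

theorem psi_sub_mem_of_reflTransGen (hG : ∀ g ∈ G, psi g.1 - psi g.2 ∈ C) {w w₁ : BWord n}
    (h : Relation.ReflTransGen (Red G) w w₁) : psi w - psi w₁ ∈ C := by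
  induction h with
  | refl => simp
  | tail _ hstep ih => simpa using C.add_mem ih (psi_sub_mem_of_red hG hstep)

end Coset

/-- **Decoding theorem.** Let `C` be a binary code of minimum
distance `d`, error-correcting capability `t = ⌊(d-1)/2⌋`, and reduced basis
`G` w.r.t. `<_e` (binomials of `G` are coset-neutral), with `Can(·, G)` the
canonical form map (the irreducible result of exhaustive reduction modulo `G`),
such that every irreducible word whose image lies in `B(C,t)` has weight `≤ t`.
Then for any word `w`: if `weight(ψ(Can(w,G))) ≤ t` then `ψ(Can(w,G))` is the
unique error vector of `ψ(w)`; and if `weight(ψ(Can(w,G))) > t` then `ψ(w)` is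
at distance `> t` from every codeword. -/
theorem stmt16 {n d t : ℕ} (C : Submodule (ZMod 2) (Fin n → ZMod 2))
    (hd : IsLeast {w : ℕ | ∃ c ∈ C, c ≠ 0 ∧ hammingNorm c = w} d)
    (ht : t = (d - 1) / 2)
    (G : Set (BWord n × BWord n))
    (hG : ∀ g ∈ G, psi g.1 - psi g.2 ∈ C)
    (can : BWord n → BWord n)
    (hcan : ∀ w : BWord n, Relation.ReflTransGen (Red G) w (can w) ∧
      ∀ w₁, ¬ Red G (can w) w₁)
    (hN5 : ∀ w : BWord n, (∀ w₁, ¬ Red G w w₁) →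
      (∃ c ∈ C, hammingDist c (psi w) ≤ t) → hammingNorm (psi w) ≤ t)
    (w : BWord n) :
    (hammingNorm (psi (can w)) ≤ t →
      psi w - psi (can w) ∈ C ∧
      ∀ e : Fin n → ZMod 2, hammingNorm e ≤ t → psi w - e ∈ C → e = psi (can w)) ∧
    (t < hammingNorm (psi (can w)) → ∀ c ∈ C, t < hammingDist c (psi w)) := by
  have hcoset : psi w - psi (can w) ∈ C := psi_sub_mem_of_reflTransGen hG (hcan w).1
  have hd_pos : 0 < d := by
    obtain ⟨c, -, hc, rfl⟩ := hd.1
    exact hammingNorm_pos_iff.2 hc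
  have htd : 2 * t < d := by omega
  refine ⟨fun hcan_le => ⟨hcoset, fun e he heC => ?_⟩, fun hcan_gt c hc => ?_⟩
  · refine eq_of_sub_mem_of_hammingNorm_le C.toAddSubgroup
      (fun c hc hne => hd.2 ⟨c, hc, hne, rfl⟩) htd he hcan_le ?_
    simpa using C.sub_mem hcoset heC
  · by_contra! hc_le
    -- the codeword `c - (ψ w - ψ (can w))` is as close to `ψ (can w)` as `c` is to `ψ w`
    have hdist := hammingDist_sub_right c (psi w) (psi w - psi (can w))
    rw [sub_sub_cancel] at hdist
    exact hcan_gt.not_ge <| hN5 _ (hcan w).2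
      ⟨_, C.sub_mem hc hcoset, hdist.trans_le hc_le⟩
end
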